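/- Consider f(x; W) = b₀ − ⟨1, max(0, W₂ᵀ max(0, W₁ᵀx + b₁) + b₂)⟩ with W₂ having all entries ≤ 0. For a fixed binary vector a₁ ∈ {0,1}^{l₁}, define f₁(x; W, a₁) = b₀ − ⟨1, max(0, W₂ᵀ·diag(a₁)·(W₁ᵀx + b₁) + b₂)⟩. Then f₁(x; W, a₁) ≤ f(x; W) for all x, and for fixed x and fixed (b₀, W₂, b₂), the map (W₁, b₁) ↦ f₁(x; W, a₁) is concave. -/

import Mathlib

/-!
With the activation pattern fixed, the first-layer rectifier is replaced by the linear map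
`z ↦ diag(a₁) z`, so `f₁` is `b₀` minus a sum of rectified affine functions of `(W₁, b₁)`,
hence concave. Since `a₁ⱼ zⱼ ≤ max 0 zⱼ` and `W₂ ⪯ 0`, the output of the second layer is
monotone in the first-layer activations, which gives `f₁ ≤ f`.
-/

open Finset

theorem ConvexOn.finset_sum {𝕜 E β ι : Type*} [Semiring 𝕜] [PartialOrder 𝕜]
    [AddCommMonoid E] [AddCommMonoid β] [PartialOrder β] [IsOrderedAddMonoid β] [SMul 𝕜 E]
    [Module 𝕜 β] {s : Set E} (hs : Convex 𝕜 s) (t : Finset ι) {f : ι → E → β}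
    (hf : ∀ i ∈ t, ConvexOn 𝕜 s (f i)) :
    ConvexOn 𝕜 s (fun p => ∑ i ∈ t, f i p) := by
  induction t using Finset.cons_induction with
  | empty => simpa using convexOn_const 0 hs
  | cons a t ha ih =>
    simp only [sum_cons]
    exact (hf a (mem_cons_self a t)).add (ih fun i hi => hf i (mem_cons_of_mem hi))

theorem concaveOn_sub_sum_max_zero_affineMap {E ι : Type*} [AddCommGroup E] [Module ℝ E]
    [Fintype ι] (c : ℝ) (g : ι → E →ᵃ[ℝ] ℝ) :
    ConcaveOn ℝ Set.univ (fun p => c - ∑ i, max 0 (g i p)) := by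
  have relu : ConvexOn ℝ Set.univ (fun t : ℝ => max 0 t) :=
    (convexOn_const 0 convex_univ).sup (convexOn_id convex_univ)
  exact (concaveOn_const c convex_univ).sub
    (ConvexOn.finset_sum convex_univ _ fun i _ => relu.comp_affineMap (g i))

theorem monotone_sub_sum_max_zero_of_nonpos {ι κ : Type*} [Fintype ι] [Fintype κ]
    (c : ℝ) (W : κ → ι → ℝ) (b : ι → ℝ) (hW : ∀ j i, W j i ≤ 0) :
    Monotone (fun z : κ → ℝ => c - ∑ i, max 0 ((∑ j, W j i * z j) + b i)) := by
  intro u v huv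
  dsimp only
  gcongr c - ∑ i, max 0 (?_ + b i) with i
  exact sum_le_sum fun j _ => mul_le_mul_of_nonpos_left (huv j) (hW j i)

theorem mul_le_max_zero_of_eq_zero_or_eq_one {α : Type*} [Semiring α] [LinearOrder α] {a : α}
    (ha : a = 0 ∨ a = 1) (z : α) :
    a * z ≤ max 0 z := by
  rcases ha with rfl | rfl <;> simp

def maskedPreactivation {n l1 : ℕ} (x : Fin n → ℝ) (a1 : Fin l1 → ℝ) :
    (Fin l1 → Fin n → ℝ) × (Fin l1 → ℝ) →ₗ[ℝ] Fin l1 → ℝ where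
  toFun p j := a1 j * ((∑ k, p.1 j k * x k) + p.2 j)
  map_add' p q := by ext j; simp [add_mul, sum_add_distrib]; ring
  map_smul' c p := by ext j; simp [mul_sum, mul_add, mul_assoc, mul_left_comm]

/-- For a two-hidden-layer sign-constrained network with `W₂ ⪯ 0` and a fixed binary
first-layer activation pattern `a₁`, the function `f₁` (replacing the first-layer rectified
outputs by `diag(a₁)·z₁`) lower bounds `f`, and `f₁` is concave in `(W₁, b₁)` for fixed
`x`, `b₀`, `W₂`, `b₂`. -/
theorem f1_lower_bound_and_concave (n l1 l2 : ℕ) (x : Fin n → ℝ) (b0 : ℝ)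
    (W2 : Fin l1 → Fin l2 → ℝ) (b2 : Fin l2 → ℝ) (a1 : Fin l1 → ℝ)
    (hW2 : ∀ j i, W2 j i ≤ 0) (ha1 : ∀ j, a1 j = 0 ∨ a1 j = 1) :
    (∀ (W1 : Fin l1 → Fin n → ℝ) (b1 : Fin l1 → ℝ),
      b0 - ∑ i, max 0 ((∑ j, W2 j i * (a1 j * ((∑ k, W1 j k * x k) + b1 j))) + b2 i) ≤
        b0 - ∑ i, max 0 ((∑ j, W2 j i * max 0 ((∑ k, W1 j k * x k) + b1 j)) + b2 i)) ∧
    ConcaveOn ℝ Set.univ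
      (fun p : (Fin l1 → Fin n → ℝ) × (Fin l1 → ℝ) =>
        b0 - ∑ i, max 0 ((∑ j, W2 j i * (a1 j * ((∑ k, p.1 j k * x k) + p.2 j))) + b2 i)) := by
  constructor
  · exact fun W1 b1 => monotone_sub_sum_max_zero_of_nonpos b0 W2 b2 hW2 fun j =>
      mul_le_max_zero_of_eq_zero_or_eq_one (ha1 j) _
  · let secondPreactivation (i : Fin l2) : (Fin l1 → Fin n → ℝ) × (Fin l1 → ℝ) →ᵃ[ℝ] ℝ :=
      (LinearMap.proj i ∘ₗ (Matrix.of W2).transpose.mulVecLin ∘ₗ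
        maskedPreactivation x a1).toAffineMap + AffineMap.const ℝ _ (b2 i)
    exact concaveOn_sub_sum_max_zero_affineMap b0 secondPreactivation
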